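/- arXiv:1006.2048 — 4 statements merged into one kernel-verified Lean document; each statement's English description precedes it below -/
import Mathlib

section
/- Suppose N ≥ 2 and w_1,…,w_N > 0, and define f(p, W) = T_c*·(1 − ∑_{i=1}^N p_i(p) − P_I(p)) + P_I(p) for p ∈ [0,1]. Then f(·, W) is strictly decreasing on [0,1], f(0, W) = 1, and f(1, W) = −(N − 1)·T_c*; consequently f(·, W) has a unique zero p* ∈ (0,1), with f(p, W) > 0 for p < p* and f(p, W) < 0 for p > p*. -/
/-!
Write `t = T_c/σ ≥ 1` and `a_i = p_i(p)`, so that `f = t (1 - ∑ a_i) - (t - 1) ∏ (1 - a_i)`.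
Each `a_i` is strictly increasing in `p`. When the `a_i` grow by a total of `Δ > 0`, the product
`∏ (1 - a_i)` of factors in `[0, 1]` drops by at most `Δ` (telescoping), so `f` drops by at least
`t Δ - (t - 1) Δ = Δ`. Since `f(0) = 1 > 0 > -(N - 1) t = f(1)`, the intermediate value theorem
gives the zero, unique by strict monotonicity.
-/

open Finset

/-- Weighted attempt probability `p_i(p) = w_i p / (1 + (w_i - 1) p)`. -/
noncomputable def wAttempt (w p : ℝ) : ℝ := w * p / (1 + (w - 1) * p)

/-- `P_I(p) = ∏ (1-p)/(1+(w_i-1) p)` for the weighted `p`-persistent scheme. -/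
noncomputable def PIw (N : ℕ) (w : Fin N → ℝ) (p : ℝ) : ℝ :=
  ∏ i, (1 - p) / (1 + (w i - 1) * p)

/-- `P_T(p) = (p/(1-p)) ∑ w_i` for the weighted `p`-persistent scheme. -/
noncomputable def PTw (N : ℕ) (w : Fin N → ℝ) (p : ℝ) : ℝ :=
  (p / (1 - p)) * ∑ i, w i

/-- System throughput `S(p, W)` of the weighted `p`-persistent scheme. -/
noncomputable def Ssys (N : ℕ) (EP σ Ts Tc : ℝ) (w : Fin N → ℝ) (p : ℝ) : ℝ :=
  EP * PTw N w p * PIw N w p /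
    (PIw N w p * σ + PTw N w p * PIw N w p * (Ts - Tc) + (1 - PIw N w p) * Tc)

/-- `f(p, W) = T_c^* (1 - ∑ p_i(p) - P_I(p)) + P_I(p)`, with `T_c^* = T_c/σ`. -/
noncomputable def fW (N : ℕ) (σ Tc : ℝ) (w : Fin N → ℝ) (p : ℝ) : ℝ :=
  (Tc / σ) * (1 - (∑ i, wAttempt (w i) p) - PIw N w p) + PIw N w p

theorem Finset.prod_sub_prod_le_sum_sub {ι R : Type*} [CommRing R] [LinearOrder R]
    [IsStrictOrderedRing R] (s : Finset ι) {x y : ι → R} (hy : ∀ i ∈ s, 0 ≤ y i)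
    (hyx : ∀ i ∈ s, y i ≤ x i) (hx : ∀ i ∈ s, x i ≤ 1) :
    ∏ i ∈ s, x i - ∏ i ∈ s, y i ≤ ∑ i ∈ s, (x i - y i) := by
  induction s using Finset.cons_induction with
  | empty => simp
  | cons a s _ ih =>
    simp only [forall_mem_cons] at hy hyx hx
    rw [prod_cons, prod_cons, sum_cons]
    have hprod_le : ∏ i ∈ s, y i ≤ ∏ i ∈ s, x i := prod_le_prod hy.2 hyx.2
    have hprod_y : ∏ i ∈ s, y i ≤ 1 := prod_le_one hy.2 fun i hi => (hyx.2 i hi).trans (hx.2 i hi)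
    have hgap_a : x a * (∏ i ∈ s, x i - ∏ i ∈ s, y i) ≤ ∏ i ∈ s, x i - ∏ i ∈ s, y i :=
      mul_le_of_le_one_left (sub_nonneg.2 hprod_le) hx.1
    have hgap_s : (x a - y a) * ∏ i ∈ s, y i ≤ x a - y a :=
      mul_le_of_le_one_right (sub_nonneg.2 hyx.1) hprod_y
    linear_combination hgap_a + hgap_s + ih hy.2 hyx.2 hx.2

theorem mul_one_sub_sum_sub_prod_add_prod_lt {ι : Type*} (s : Finset ι) {t : ℝ} (ht : 1 ≤ t)
    {a b : ι → ℝ} (ha : ∀ i ∈ s, 0 ≤ a i) (hab : ∀ i ∈ s, a i ≤ b i) (hb : ∀ i ∈ s, b i ≤ 1)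
    (hsum : ∑ i ∈ s, a i < ∑ i ∈ s, b i) :
    t * (1 - ∑ i ∈ s, b i - ∏ i ∈ s, (1 - b i)) + ∏ i ∈ s, (1 - b i) <
      t * (1 - ∑ i ∈ s, a i - ∏ i ∈ s, (1 - a i)) + ∏ i ∈ s, (1 - a i) := by
  have hidle : ∏ i ∈ s, (1 - a i) - ∏ i ∈ s, (1 - b i) ≤ ∑ i ∈ s, b i - ∑ i ∈ s, a i := by
    calc ∏ i ∈ s, (1 - a i) - ∏ i ∈ s, (1 - b i) ≤ ∑ i ∈ s, ((1 - a i) - (1 - b i)) :=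
          prod_sub_prod_le_sum_sub s (fun i hi => sub_nonneg.2 (hb i hi))
            (fun i hi => sub_le_sub_left (hab i hi) 1) (fun i hi => sub_le_self 1 (ha i hi))
      _ = ∑ i ∈ s, b i - ∑ i ∈ s, a i := by
          rw [← sum_sub_distrib]; exact sum_congr rfl fun _ _ => by ring
  linarith [mul_le_mul_of_nonneg_left hidle (sub_nonneg.2 ht)]

theorem exists_unique_eq_of_strictAntiOn {α δ : Type*} [ConditionallyCompleteLinearOrder α]
    [DenselyOrdered α] [TopologicalSpace α] [OrderTopology α] [LinearOrder δ]
    [TopologicalSpace δ] [OrderClosedTopology δ] {f : α → δ} {a b : α} {c : δ} (hab : a ≤ b)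
    (hf : StrictAntiOn f (Set.Icc a b)) (hcont : ContinuousOn f (Set.Icc a b))
    (ha : c < f a) (hb : f b < c) :
    ∃ x ∈ Set.Ioo a b, f x = c ∧ (∀ y ∈ Set.Ioo a b, f y = c → y = x) ∧
      (∀ y ∈ Set.Icc a b, y < x → c < f y) ∧ (∀ y ∈ Set.Icc a b, x < y → f y < c) := by
  obtain ⟨x, hx, hfx⟩ := intermediate_value_Icc' hab hcont ⟨hb.le, ha.le⟩
  have hxa : x ≠ a := by rintro rfl; exact ha.ne' hfx
  have hxb : x ≠ b := by rintro rfl; exact hb.ne hfx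
  refine ⟨x, ⟨hx.1.lt_of_ne' hxa, hx.2.lt_of_ne hxb⟩, hfx, ?_, ?_, ?_⟩
  · exact fun y hy hfy => hf.injOn (Set.Ioo_subset_Icc_self hy) hx (hfy.trans hfx.symm)
  · exact fun y hy hyx => hfx ▸ hf hy hx hyx
  · exact fun y hy hxy => hfx ▸ hf hx hy hxy

section

variable {w p : ℝ}

theorem wAttempt_denom_pos (hw : 0 < w) (hp0 : 0 ≤ p) (hp1 : p ≤ 1) :
    0 < 1 + (w - 1) * p := by
  rcases hp0.eq_or_lt with rfl | hp0
  · norm_num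
  · nlinarith

theorem wAttempt_nonneg (hw : 0 < w) (hp0 : 0 ≤ p) (hp1 : p ≤ 1) : 0 ≤ wAttempt w p :=
  div_nonneg (by positivity) (wAttempt_denom_pos hw hp0 hp1).le

theorem wAttempt_le_one (hw : 0 < w) (hp0 : 0 ≤ p) (hp1 : p ≤ 1) : wAttempt w p ≤ 1 := by
  rw [wAttempt, div_le_one (wAttempt_denom_pos hw hp0 hp1)]
  linarith

theorem wAttempt_one (hw : 0 < w) : wAttempt w 1 = 1 := by
  rw [wAttempt, mul_one, mul_one, add_sub_cancel, div_self hw.ne']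

theorem one_sub_wAttempt (hw : 0 < w) (hp0 : 0 ≤ p) (hp1 : p ≤ 1) :
    1 - wAttempt w p = (1 - p) / (1 + (w - 1) * p) := by
  rw [wAttempt, eq_div_iff (wAttempt_denom_pos hw hp0 hp1).ne', sub_mul,
    div_mul_cancel₀ _ (wAttempt_denom_pos hw hp0 hp1).ne']
  ring

theorem strictMonoOn_wAttempt (hw : 0 < w) : StrictMonoOn (wAttempt w) (Set.Icc 0 1) := by
  rintro p ⟨hp0, hp1⟩ q ⟨hq0, hq1⟩ hpq
  rw [wAttempt, wAttempt, div_lt_div_iff₀ (wAttempt_denom_pos hw hp0 hp1)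
    (wAttempt_denom_pos hw hq0 hq1)]
  nlinarith

theorem continuousOn_wAttempt (hw : 0 < w) : ContinuousOn (wAttempt w) (Set.Icc 0 1) :=
  ContinuousOn.div (by fun_prop) (by fun_prop) fun _ hp => (wAttempt_denom_pos hw hp.1 hp.2).ne'

end

section

variable {N : ℕ} {w : Fin N → ℝ} {σ Tc p : ℝ}

theorem PIw_eq_prod_one_sub_wAttempt (hw : ∀ i, 0 < w i) (hp0 : 0 ≤ p) (hp1 : p ≤ 1) :
    PIw N w p = ∏ i, (1 - wAttempt (w i) p) :=
  prod_congr rfl fun i _ => (one_sub_wAttempt (hw i) hp0 hp1).symm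

theorem fW_zero : fW N σ Tc w 0 = 1 := by
  simp [fW, PIw, wAttempt]

theorem fW_one (hN : 0 < N) (hw : ∀ i, 0 < w i) :
    fW N σ Tc w 1 = -((N : ℝ) - 1) * (Tc / σ) := by
  have hPI : PIw N w 1 = 0 := prod_eq_zero (mem_univ ⟨0, hN⟩) (by simp)
  simp only [fW, hPI, wAttempt_one (hw _), sum_const, card_univ, Fintype.card_fin, nsmul_one]
  ring

theorem fW_strictAntiOn (hN : 0 < N) (hσ : 0 < σ) (hTc : σ ≤ Tc) (hw : ∀ i, 0 < w i) :
    StrictAntiOn (fW N σ Tc w) (Set.Icc 0 1) := by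
  rintro p hp q hq hpq
  have hmono i := strictMonoOn_wAttempt (hw i) hp hq hpq
  simp only [fW, PIw_eq_prod_one_sub_wAttempt hw hp.1 hp.2,
    PIw_eq_prod_one_sub_wAttempt hw hq.1 hq.2]
  exact mul_one_sub_sum_sub_prod_add_prod_lt univ ((one_le_div hσ).2 hTc)
    (fun i _ => wAttempt_nonneg (hw i) hp.1 hp.2) (fun i _ => (hmono i).le)
    (fun i _ => wAttempt_le_one (hw i) hq.1 hq.2)
    (sum_lt_sum_of_nonempty (univ_nonempty_iff.2 ⟨⟨0, hN⟩⟩) fun i _ => hmono i)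

theorem fW_continuousOn (hw : ∀ i, 0 < w i) : ContinuousOn (fW N σ Tc w) (Set.Icc 0 1) := by
  have hPI : ContinuousOn (PIw N w) (Set.Icc 0 1) :=
    (continuousOn_finsetProd _ fun i _ =>
      continuousOn_const.sub (continuousOn_wAttempt (hw i))).congr
        fun _ hp => PIw_eq_prod_one_sub_wAttempt hw hp.1 hp.2
  have hsum : ContinuousOn (fun p => ∑ i, wAttempt (w i) p) (Set.Icc 0 1) :=
    continuousOn_finsetSum _ fun i _ => continuousOn_wAttempt (hw i)
  unfold fW
  fun_prop

end

theorem fW_strict_decreasing_unique_zero_general (N : ℕ) (hN : 2 ≤ N) (σ Tc : ℝ)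
    (hσ : 0 < σ) (hTc : σ ≤ Tc)
    (w : Fin N → ℝ) (hw : ∀ i, 0 < w i) :
    StrictAntiOn (fW N σ Tc w) (Set.Icc 0 1) ∧
    fW N σ Tc w 0 = 1 ∧
    fW N σ Tc w 1 = -((N : ℝ) - 1) * (Tc / σ) ∧
    ∃ pstar : ℝ, pstar ∈ Set.Ioo (0 : ℝ) 1 ∧ fW N σ Tc w pstar = 0 ∧
      (∀ p' ∈ Set.Ioo (0 : ℝ) 1, fW N σ Tc w p' = 0 → p' = pstar) ∧
      (∀ p ∈ Set.Icc (0 : ℝ) 1, p < pstar → 0 < fW N σ Tc w p) ∧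
      (∀ p ∈ Set.Icc (0 : ℝ) 1, pstar < p → fW N σ Tc w p < 0) := by
  have hN0 : 0 < N := by omega
  have hanti := fW_strictAntiOn hN0 hσ hTc hw
  have hone := fW_one (σ := σ) (Tc := Tc) hN0 hw
  have hone_neg : fW N σ Tc w 1 < 0 := by
    have : (1 : ℝ) < N := by exact_mod_cast hN
    rw [hone]
    exact mul_neg_of_neg_of_pos (by linarith) (div_pos (hσ.trans_le hTc) hσ)
  exact ⟨hanti, fW_zero, hone, exists_unique_eq_of_strictAntiOn zero_le_one hanti
    (fW_continuousOn hw) (fW_zero ▸ one_pos) hone_neg⟩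

/-- `f(·, W)` is strictly decreasing on `[0,1]`, `f(0,W) = 1`, `f(1,W) = -(N-1) T_c^*`;
consequently it has a unique zero `p* ∈ (0,1)`, is positive before it and negative after it. -/
theorem fW_strict_decreasing_unique_zero (N : ℕ) (hN : 2 ≤ N) (EP σ Ts Tc : ℝ)
    (hEP : 0 < EP) (hσ : 0 < σ) (hTc : σ ≤ Tc) (hTs : Tc ≤ Ts)
    (w : Fin N → ℝ) (hw : ∀ i, 0 < w i) :
    StrictAntiOn (fW N σ Tc w) (Set.Icc 0 1) ∧
    fW N σ Tc w 0 = 1 ∧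
    fW N σ Tc w 1 = -((N : ℝ) - 1) * (Tc / σ) ∧
    ∃ pstar : ℝ, pstar ∈ Set.Ioo (0 : ℝ) 1 ∧ fW N σ Tc w pstar = 0 ∧
      (∀ p' ∈ Set.Ioo (0 : ℝ) 1, fW N σ Tc w p' = 0 → p' = pstar) ∧
      (∀ p ∈ Set.Icc (0 : ℝ) 1, p < pstar → 0 < fW N σ Tc w p) ∧
      (∀ p ∈ Set.Icc (0 : ℝ) 1, pstar < p → fW N σ Tc w p < 0) :=
  fW_strict_decreasing_unique_zero_general N hN σ Tc hσ hTc w hw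
end

section
/- Suppose N ≥ 2 and w_1,…,w_N > 0, and define f(p, W) = T_c*·(1 − ∑_{i=1}^N p_i(p) − P_I(p)) + P_I(p). Then for every p ∈ (0,1), the derivative ∂S(p, W)/∂p exists and has the same sign as f(p, W): it is positive when f(p, W) > 0, negative when f(p, W) < 0, and zero when f(p, W) = 0. -/
open Finset

/-! Both `P_T` and `P_I` have simple logarithmic derivatives, `1 / (p (1 - p))` and
`-(∑ p_i) / (p (1 - p))`. Feeding these into the quotient rule for `S`, the `T_s` terms cancel and
the numerator collapses to `E_P σ P_T P_I f(p, W) / (p (1 - p))`. Since the denominator of `S` is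
positive, `∂S/∂p` is a positive multiple of `f(p, W)`. -/

theorem HasDerivAt.fun_finsetProd_of_logDeriv {𝕜 𝔸 ι : Type*} [NontriviallyNormedField 𝕜]
    [NormedCommRing 𝔸] [NormedAlgebra 𝕜 𝔸] [DecidableEq ι] {u : Finset ι} {f : ι → 𝕜 → 𝔸}
    {g : ι → 𝔸} {x : 𝕜} (hf : ∀ i ∈ u, HasDerivAt (f i) (f i x * g i) x) :
    HasDerivAt (∏ i ∈ u, f i ·) ((∏ i ∈ u, f i x) * ∑ i ∈ u, g i) x := by
  convert HasDerivAt.fun_finsetProd hf using 1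
  rw [Finset.mul_sum]
  refine Finset.sum_congr rfl fun i hi => ?_
  rw [smul_eq_mul, ← mul_assoc, Finset.prod_erase_mul u (f · x) hi]

-- The factor is `1 - p_i(p)`, the probability that station `i` stays idle.
theorem hasDerivAt_idleFactor {w p : ℝ} (hq : 1 + (w - 1) * p ≠ 0) (hp₀ : p ≠ 0)
    (hp₁ : 1 - p ≠ 0) :
    HasDerivAt (fun x => (1 - x) / (1 + (w - 1) * x))
      ((1 - p) / (1 + (w - 1) * p) * -(wAttempt w p / (p * (1 - p)))) p := by
  have hnum : HasDerivAt (fun x : ℝ => 1 - x) (-1) p := by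
    simpa using (hasDerivAt_id p).const_sub 1
  have hden : HasDerivAt (fun x : ℝ => 1 + (w - 1) * x) (w - 1) p := by
    simpa using ((hasDerivAt_id p).const_mul (w - 1)).const_add 1
  refine (hnum.div hden hq).congr_deriv ?_
  rw [wAttempt]
  field_simp
  ring

theorem hasDerivAt_PIw {N : ℕ} {w : Fin N → ℝ} {p : ℝ}
    (hq : ∀ i, 1 + (w i - 1) * p ≠ 0) (hp₀ : p ≠ 0) (hp₁ : 1 - p ≠ 0) :
    HasDerivAt (PIw N w) (-(PIw N w p * ∑ i, wAttempt (w i) p) / (p * (1 - p))) p := by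
  refine (HasDerivAt.fun_finsetProd_of_logDeriv (u := Finset.univ)
    fun i _ => hasDerivAt_idleFactor (hq i) hp₀ hp₁).congr_deriv ?_
  rw [Finset.sum_neg_distrib, ← Finset.sum_div, PIw]
  ring

theorem hasDerivAt_PTw {N : ℕ} (w : Fin N → ℝ) {p : ℝ} (hp₀ : p ≠ 0) (hp₁ : 1 - p ≠ 0) :
    HasDerivAt (PTw N w) (PTw N w p / (p * (1 - p))) p := by
  have hnum : HasDerivAt (fun x : ℝ => 1 - x) (-1) p := by
    simpa using (hasDerivAt_id p).const_sub 1
  refine (((hasDerivAt_id' p).div hnum hp₁).mul_const (∑ i, w i)).congr_deriv ?_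
  rw [PTw]
  field_simp
  ring

theorem hasDerivAt_throughput {T I : ℝ → ℝ} {T' I' p : ℝ} (EP σ Ts Tc : ℝ)
    (hT : HasDerivAt T T' p) (hI : HasDerivAt I I' p)
    (hD : I p * σ + T p * I p * (Ts - Tc) + (1 - I p) * Tc ≠ 0) :
    HasDerivAt (fun x => EP * T x * I x / (I x * σ + T x * I x * (Ts - Tc) + (1 - I x) * Tc))
      (EP * ((T' * I p + T p * I') * (I p * σ + (1 - I p) * Tc) - T p * I p * I' * (σ - Tc)) /
        (I p * σ + T p * I p * (Ts - Tc) + (1 - I p) * Tc) ^ 2) p := by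
  refine (((hT.const_mul EP).mul hI).div (((hI.mul_const σ).add
    ((hT.mul hI).mul_const (Ts - Tc))).add ((hI.const_sub 1).mul_const Tc)) hD).congr_deriv ?_
  simp only [Pi.add_apply, Pi.mul_apply]
  ring

noncomputable def SsysDenom (N : ℕ) (σ Ts Tc : ℝ) (w : Fin N → ℝ) (p : ℝ) : ℝ :=
  PIw N w p * σ + PTw N w p * PIw N w p * (Ts - Tc) + (1 - PIw N w p) * Tc

theorem hasDerivAt_Ssys {N : ℕ} {EP σ Ts Tc : ℝ} {w : Fin N → ℝ} {p : ℝ} (hσ : σ ≠ 0)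
    (hq : ∀ i, 1 + (w i - 1) * p ≠ 0) (hp₀ : p ≠ 0) (hp₁ : 1 - p ≠ 0)
    (hD : SsysDenom N σ Ts Tc w p ≠ 0) :
    HasDerivAt (Ssys N EP σ Ts Tc w)
      (EP * σ * PTw N w p * PIw N w p / (p * (1 - p) * SsysDenom N σ Ts Tc w p ^ 2) *
        fW N σ Tc w p) p := by
  refine (hasDerivAt_throughput EP σ Ts Tc (hasDerivAt_PTw w hp₀ hp₁)
    (hasDerivAt_PIw hq hp₀ hp₁) hD).congr_deriv ?_
  rw [fW, SsysDenom]
  field_simp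
  ring

theorem one_add_sub_one_mul_pos {w p : ℝ} (hw : 0 < w) (hp₀ : 0 ≤ p) (hp₁ : p < 1) :
    0 < 1 + (w - 1) * p := by
  nlinarith

section Positivity

variable {N : ℕ} {w : Fin N → ℝ} {p : ℝ}

theorem PIw_pos (hw : ∀ i, 0 < w i) (hp₀ : 0 ≤ p) (hp₁ : p < 1) : 0 < PIw N w p :=
  Finset.prod_pos fun i _ => div_pos (by linarith) (one_add_sub_one_mul_pos (hw i) hp₀ hp₁)

theorem PIw_le_one (hw : ∀ i, 0 < w i) (hp₀ : 0 ≤ p) (hp₁ : p < 1) : PIw N w p ≤ 1 := by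
  refine Finset.prod_le_one (fun i _ => ?_) (fun i _ => ?_)
  · exact (div_pos (by linarith) (one_add_sub_one_mul_pos (hw i) hp₀ hp₁)).le
  · rw [div_le_one (one_add_sub_one_mul_pos (hw i) hp₀ hp₁)]
    nlinarith [hw i]

theorem PTw_pos (hN : 0 < N) (hw : ∀ i, 0 < w i) (hp₀ : 0 < p) (hp₁ : p < 1) :
    0 < PTw N w p :=
  mul_pos (div_pos hp₀ (by linarith))
    (Finset.sum_pos (fun i _ => hw i) ⟨⟨0, hN⟩, Finset.mem_univ _⟩)

theorem SsysDenom_pos {σ Ts Tc : ℝ} (hσ : 0 < σ) (hTc : 0 ≤ Tc) (hTs : Tc ≤ Ts)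
    (hw : ∀ i, 0 < w i) (hp₀ : 0 ≤ p) (hp₁ : p < 1) (hT : 0 ≤ PTw N w p) :
    0 < SsysDenom N σ Ts Tc w p := by
  have hI := PIw_pos hw hp₀ hp₁
  have hI₁ := PIw_le_one hw hp₀ hp₁
  unfold SsysDenom
  have := mul_nonneg (mul_nonneg hT hI.le) (sub_nonneg.2 hTs)
  nlinarith [mul_nonneg (sub_nonneg.2 hI₁) hTc]

end Positivity

/-- For every `p ∈ (0,1)`, the derivative `∂S(p,W)/∂p` exists and has the same sign as
`f(p, W)`: positive when `f(p,W) > 0`, negative when `f(p,W) < 0`, and zero when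
`f(p,W) = 0`. -/
theorem deriv_Ssys_sign_eq_fW (N : ℕ) (hN : 2 ≤ N) (EP σ Ts Tc : ℝ)
    (hEP : 0 < EP) (hσ : 0 < σ) (hTc : σ ≤ Tc) (hTs : Tc ≤ Ts)
    (w : Fin N → ℝ) (hw : ∀ i, 0 < w i)
    (p : ℝ) (hp : p ∈ Set.Ioo (0 : ℝ) 1) :
    ∃ d : ℝ, HasDerivAt (Ssys N EP σ Ts Tc w) d p ∧
      (0 < fW N σ Tc w p → 0 < d) ∧
      (fW N σ Tc w p < 0 → d < 0) ∧
      (fW N σ Tc w p = 0 → d = 0) := by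
  obtain ⟨hp₀, hp₁⟩ := hp
  have hT := PTw_pos (by omega) hw hp₀ hp₁
  have hI := PIw_pos hw hp₀.le hp₁
  have hD := SsysDenom_pos hσ (by linarith) hTs hw hp₀.le hp₁ hT.le
  have hcoeff : 0 < EP * σ * PTw N w p * PIw N w p /
      (p * (1 - p) * SsysDenom N σ Ts Tc w p ^ 2) := by
    have : 0 < 1 - p := by linarith
    positivity
  refine ⟨_, hasDerivAt_Ssys hσ.ne' (fun i => (one_add_sub_one_mul_pos (hw i) hp₀.le hp₁).ne')
    hp₀.ne' (by linarith) hD.ne', fun h => mul_pos hcoeff h, fun h => mul_neg_of_pos_of_neg hcoeff h,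
    fun h => by rw [h, mul_zero]⟩
end

section
/- Let q and q' be reset distributions such that τ̂_c(q) < τ̂_c(q') for every c ∈ [0,1). Then the fixed-point attempt probabilities satisfy τ̂(q) < τ̂(q'). -/
open Finset

/-- `α_j(c) = (1-c) ∑_{i=j}^m 2^i c^{i-j} + 2^m c^{m-j}`. -/
noncomputable def alphaB (m j : ℕ) (c : ℝ) : ℝ :=
  (1 - c) * ∑ i ∈ Finset.Icc j m, (2 : ℝ) ^ i * c ^ (i - j) + (2 : ℝ) ^ m * c ^ (m - j)

/-- `κ_0 = 2 / CW_min`. -/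
noncomputable def kappa0 (CWmin : ℕ) : ℝ := 2 / (CWmin : ℝ)

/-- A reset distribution `q = (q_0, …, q_m)`. -/
def IsResetDist (m : ℕ) (q : Fin (m + 1) → ℝ) : Prop :=
  (∀ j, 0 ≤ q j) ∧ (∑ j, q j) = 1

/-- Conditional attempt probability `τ̂_c(q) = κ_0 / ∑_j q_j α_j(c)`. -/
noncomputable def tauHatC (m CWmin : ℕ) (q : Fin (m + 1) → ℝ) (c : ℝ) : ℝ :=
  kappa0 CWmin / ∑ j : Fin (m + 1), q j * alphaB m (j : ℕ) c

/-- RandomReset(j; p₀) conditional attempt probability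
`τ_c(j;p₀) = κ_0 / (p₀ α_j(c) + ((1-p₀)/(m-j)) ∑_{i=j+1}^m α_i(c))`. -/
noncomputable def tauRRC (m CWmin : ℕ) (j : ℕ) (p0 c : ℝ) : ℝ :=
  kappa0 CWmin /
    (p0 * alphaB m j c + ((1 - p0) / ((m : ℝ) - (j : ℝ))) * ∑ i ∈ Finset.Icc (j + 1) m, alphaB m i c)

/-- `τ ∈ [0,1]` is the fixed-point attempt probability `τ̂(q)` of the reset distribution `q`
for `N` nodes: `τ = τ̂_{1-(1-τ)^(N-1)}(q)`. -/
def IsFixedPointQ (m CWmin N : ℕ) (q : Fin (m + 1) → ℝ) (τ : ℝ) : Prop :=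
  τ ∈ Set.Icc (0 : ℝ) 1 ∧ τ = tauHatC m CWmin q (1 - (1 - τ) ^ (N - 1))

/-- `τ ∈ [0,1]` is the fixed-point attempt probability `τ(j;p₀)` of the RandomReset(j;p₀)
policy for `N` nodes: `τ = τ_{1-(1-τ)^(N-1)}(j;p₀)`. -/
def IsFixedPointRR (m CWmin N : ℕ) (j : ℕ) (p0 τ : ℝ) : Prop :=
  τ ∈ Set.Icc (0 : ℝ) 1 ∧ τ = tauRRC m CWmin j p0 (1 - (1 - τ) ^ (N - 1))


/-! With `c(t) = 1 - (1 - t)^(N-1)`, a fixed point `τ` of `q` solves `ψ_q(τ) = κ₀`, where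
`ψ_q(t) = t · ∑ⱼ qⱼ αⱼ(c(t))`. Each `t ↦ t αⱼ(c(t))` is monotone on `[0,1]`: through the
recursion `αⱼ = (1 - c) 2^j + c αⱼ₊₁` this reduces to the monotonicity of `t (2 - c(t))` and
`t c(t) (3 - 2c(t))`, a one-variable derivative computation. At `c = c(τ)`, which is `< 1`
because a fixed point with `c = 1` would equal `κ₀ / 2^m ≤ 1/2`, the hypothesis says
`∑ q'ⱼ αⱼ(c) < ∑ qⱼ αⱼ(c)`, so `ψ_{q'}(τ) < ψ_q(τ) = κ₀ = ψ_{q'}(τ')`, and monotonicity of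
`ψ_{q'}` gives `τ < τ'`. -/

noncomputable def collisionProb (n : ℕ) (t : ℝ) : ℝ := 1 - (1 - t) ^ n

noncomputable def alphaBar (m : ℕ) (q : Fin (m + 1) → ℝ) (c : ℝ) : ℝ :=
  ∑ j : Fin (m + 1), q j * alphaB m j c

lemma alphaB_self (m : ℕ) (c : ℝ) : alphaB m m c = 2 ^ m * (2 - c) := by
  simp only [alphaB, Icc_self, sum_singleton, tsub_self, pow_zero, mul_one]
  ring

lemma alphaB_one (m j : ℕ) : alphaB m j 1 = 2 ^ m := by
  simp [alphaB]

lemma alphaB_of_lt {m j : ℕ} (hj : j < m) (c : ℝ) :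
    alphaB m j c = (1 - c) * 2 ^ j + c * alphaB m (j + 1) c := by
  have hsum : ∑ i ∈ Icc j m, (2 : ℝ) ^ i * c ^ (i - j)
      = 2 ^ j + c * ∑ i ∈ Icc (j + 1) m, (2 : ℝ) ^ i * c ^ (i - (j + 1)) := by
    rw [Finset.Icc_eq_cons_Ioc hj.le, sum_cons, ← Finset.Icc_add_one_left_eq_Ioc, mul_sum,
      Nat.sub_self, pow_zero, mul_one]
    congr 1
    refine sum_congr rfl fun i hi => ?_
    rw [show i - j = i - (j + 1) + 1 by grind, pow_succ]
    ring
  have hpow : c ^ (m - j) = c * c ^ (m - (j + 1)) := by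
    rw [← pow_succ']; congr 1; omega
  rw [alphaB, alphaB, hsum, hpow]
  ring

lemma two_pow_le_alphaB {m j : ℕ} (hj : j ≤ m) {c : ℝ} (hc : c ∈ Set.Icc 0 1) :
    2 ^ j ≤ alphaB m j c := by
  induction hj using Nat.decreasingInduction with
  | self => rw [alphaB_self]; nlinarith [hc.2, pow_pos (two_pos (α := ℝ)) m]
  | of_succ j hj ih =>
    rw [alphaB_of_lt hj]
    rw [pow_succ] at ih
    nlinarith [hc.1, hc.2, pow_pos (two_pos (α := ℝ)) j]

lemma natCast_mul_pow_pred_mul_one_sub_le (n : ℕ) {u : ℝ} (h0 : 0 ≤ u) (h1 : u ≤ 1) :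
    n * u ^ (n - 1) * (1 - u) ≤ 1 - u ^ n := by
  have hgeom : (∑ i ∈ range n, u ^ i) * (1 - u) = 1 - u ^ n := by
    linear_combination -(geom_sum_mul u n)
  have hsum : n * u ^ (n - 1) ≤ ∑ i ∈ range n, u ^ i := by
    simpa using card_nsmul_le_sum (range n) (u ^ ·) (u ^ (n - 1))
      fun i hi => pow_le_pow_of_le_one h0 h1 (by grind)
  rw [← hgeom]
  exact mul_le_mul_of_nonneg_right hsum (by linarith)

lemma hasDerivAt_collisionProb (n : ℕ) (t : ℝ) :
    HasDerivAt (collisionProb n) (n * (1 - t) ^ (n - 1)) t := by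
  have h : HasDerivAt (fun x : ℝ => 1 - (1 - x) ^ n) (-(n * (1 - t) ^ (n - 1) * -1)) t :=
    (((hasDerivAt_id' t).const_sub 1).pow n).const_sub 1
  unfold collisionProb
  simpa using h

lemma collisionProb_mem_Icc (n : ℕ) {t : ℝ} (ht : t ∈ Set.Icc 0 1) :
    collisionProb n t ∈ Set.Icc 0 1 := by
  obtain ⟨h0, h1⟩ := ht
  constructor
  · have := pow_le_one₀ (n := n) (sub_nonneg.2 h1) (by linarith)
    simp only [collisionProb]; linarith
  · simp only [collisionProb]; linarith [pow_nonneg (sub_nonneg.2 h1) n]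

lemma monotoneOn_collisionProb (n : ℕ) : MonotoneOn (collisionProb n) (Set.Icc 0 1) :=
  fun _ _ _ hb hab => sub_le_sub_left (pow_le_pow_left₀ (by linarith [hb.2]) (by linarith) n) 1

lemma monotoneOn_Icc_of_hasDerivAt_nonneg {f f' : ℝ → ℝ} {a b : ℝ}
    (hf : ∀ x, HasDerivAt f (f' x) x) (hf' : ∀ x ∈ Set.Ioo a b, 0 ≤ f' x) :
    MonotoneOn f (Set.Icc a b) := by
  refine monotoneOn_of_hasDerivWithinAt_nonneg (convex_Icc a b)
    (fun x _ => (hf x).continuousAt.continuousWithinAt) (fun x _ => (hf x).hasDerivWithinAt) ?_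
  simpa only [interior_Icc] using hf'

lemma monotoneOn_mul_two_sub_collisionProb (n : ℕ) :
    MonotoneOn (fun t => t * (2 - collisionProb n t)) (Set.Icc 0 1) := by
  refine monotoneOn_Icc_of_hasDerivAt_nonneg
    (fun t => (hasDerivAt_id' t).mul ((hasDerivAt_collisionProb n t).const_sub 2)) ?_
  intro t ⟨h0, h1⟩
  have key := natCast_mul_pow_pred_mul_one_sub_le n (u := 1 - t) (by linarith) (by linarith)
  simp only [collisionProb, sub_sub_cancel] at key ⊢
  nlinarith [pow_nonneg (sub_nonneg.2 h1.le) n]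

lemma monotoneOn_mul_collisionProb_mul_three_sub (n : ℕ) :
    MonotoneOn (fun t => t * collisionProb n t * (3 - 2 * collisionProb n t)) (Set.Icc 0 1) := by
  refine monotoneOn_Icc_of_hasDerivAt_nonneg (fun t =>
    ((hasDerivAt_id' t).mul (hasDerivAt_collisionProb n t)).mul
      (((hasDerivAt_collisionProb n t).const_mul 2).const_sub 3)) ?_
  intro t ht
  have hc := collisionProb_mem_Icc n (Set.Ioo_subset_Icc_self ht)
  set c := collisionProb n t
  -- with `A = t c'(t)`, the derivative is `(c - A)(3 - 2c) + 6A(1 - c)`, and `0 ≤ A ≤ c`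
  set A := t * (n * (1 - t) ^ (n - 1))
  have hA0 : 0 ≤ A :=
    mul_nonneg ht.1.le (mul_nonneg n.cast_nonneg (pow_nonneg (by linarith [ht.2]) _))
  have hAc : A ≤ c := by
    have := natCast_mul_pow_pred_mul_one_sub_le n (u := 1 - t)
      (by linarith [ht.2]) (by linarith [ht.1])
    simp only [A, c, collisionProb]; linarith
  change 0 ≤ (1 * c + A) * (3 - 2 * c) + t * c * -(2 * (n * (1 - t) ^ (n - 1)))
  nlinarith [mul_nonneg (sub_nonneg.2 hAc) (by linarith [hc.2] : (0:ℝ) ≤ 3 - 2 * c),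
    mul_nonneg hA0 (sub_nonneg.2 hc.2)]

/- `t αⱼ(c(t))` itself does not pass through the induction, since `t (1 - c(t))` is not
monotone; `Fⱼ(t) = t c(t) (2 αⱼ(c(t)) - 2^j)` does, as `Fⱼ = 2^j t c + c Fⱼ₊₁`, and
`t αⱼ = 2^j t + Fⱼ₊₁ / 2`. -/
lemma monotoneOn_mul_collisionProb_mul_two_mul_alphaB_sub {m j : ℕ} (hj : j ≤ m) (n : ℕ) :
    MonotoneOn (fun t => t * collisionProb n t * (2 * alphaB m j (collisionProb n t) - 2 ^ j))
      (Set.Icc 0 1) := by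
  induction hj using Nat.decreasingInduction with
  | self =>
    have h := monotoneOn_mul_collisionProb_mul_three_sub n
    refine fun a ha b hb hab => ?_
    simp only [alphaB_self]
    nlinarith [h ha hb hab, pow_pos (two_pos (α := ℝ)) m]
  | of_succ j hj ih =>
    have hcmono := monotoneOn_collisionProb n
    have htc : MonotoneOn (fun t => t * collisionProb n t) (Set.Icc 0 1) :=
      monotoneOn_id.mul hcmono (fun _ ht => ht.1) fun _ ht => (collisionProb_mem_Icc n ht).1
    have hF := hcmono.mul ih (fun _ ht => (collisionProb_mem_Icc n ht).1) fun t ht => by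
      have hct := collisionProb_mem_Icc n ht
      have h2 : (2 : ℝ) ^ (j + 1) ≤ alphaB m (j + 1) (collisionProb n t) := two_pow_le_alphaB hj hct
      exact mul_nonneg (mul_nonneg ht.1 hct.1) (by linarith [pow_pos (two_pos (α := ℝ)) (j + 1)])
    have key : ∀ t, t * collisionProb n t * (2 * alphaB m j (collisionProb n t) - 2 ^ j)
        = 2 ^ j * (t * collisionProb n t) + collisionProb n t *
          (t * collisionProb n t * (2 * alphaB m (j + 1) (collisionProb n t) - 2 ^ (j + 1))) := by
      intro t
      rw [alphaB_of_lt hj, pow_succ]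
      ring
    refine fun a ha b hb hab => ?_
    have hFab := hF ha hb hab
    simp only [Pi.mul_apply] at hFab
    simp only [key]
    linarith [mul_le_mul_of_nonneg_left (htc ha hb hab) (by positivity : (0:ℝ) ≤ 2 ^ j)]

lemma monotoneOn_mul_alphaB {m j : ℕ} (hj : j ≤ m) (n : ℕ) :
    MonotoneOn (fun t => t * alphaB m j (collisionProb n t)) (Set.Icc 0 1) := by
  refine fun a ha b hb hab => ?_
  rcases hj.lt_or_eq with hj | rfl
  · have h := monotoneOn_mul_collisionProb_mul_two_mul_alphaB_sub (Nat.succ_le_of_lt hj) n ha hb hab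
    simp only [alphaB_of_lt hj, pow_succ] at h ⊢
    nlinarith [pow_pos (two_pos (α := ℝ)) j]
  · have h := monotoneOn_mul_two_sub_collisionProb n ha hb hab
    simp only [alphaB_self] at h ⊢
    nlinarith [pow_pos (two_pos (α := ℝ)) j]

lemma monotoneOn_mul_alphaBar {m : ℕ} {q : Fin (m + 1) → ℝ} (hq : ∀ j, 0 ≤ q j) (n : ℕ) :
    MonotoneOn (fun t => t * alphaBar m q (collisionProb n t)) (Set.Icc 0 1) := by
  refine fun a ha b hb hab => ?_
  simp only [alphaBar, mul_sum, mul_left_comm _ (q _)]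
  exact sum_le_sum fun j _ =>
    mul_le_mul_of_nonneg_left (monotoneOn_mul_alphaB j.is_le n ha hb hab) (hq j)

lemma kappa0_pos {CWmin : ℕ} (h : 1 ≤ CWmin) : 0 < kappa0 CWmin := by
  unfold kappa0; positivity

lemma kappa0_le_one {CWmin : ℕ} (h : 2 ≤ CWmin) : kappa0 CWmin ≤ 1 := by
  unfold kappa0
  rw [div_le_one (by positivity)]
  exact_mod_cast h

section ResetDist

variable {m : ℕ} {q : Fin (m + 1) → ℝ}

lemma one_le_alphaBar (hq : IsResetDist m q) {c : ℝ} (hc : c ∈ Set.Icc 0 1) :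
    1 ≤ alphaBar m q c :=
  calc (1 : ℝ) = ∑ j, q j := hq.2.symm
    _ ≤ alphaBar m q c := sum_le_sum fun j _ => le_mul_of_one_le_right (hq.1 j)
        ((one_le_pow₀ one_le_two).trans (two_pow_le_alphaB j.is_le hc))

lemma alphaBar_one (hq : IsResetDist m q) : alphaBar m q 1 = 2 ^ m := by
  simp only [alphaBar, alphaB_one, ← sum_mul, hq.2, one_mul]

lemma alphaBar_lt_of_tauHatC_lt {CWmin : ℕ} (hCW : 1 ≤ CWmin) {q' : Fin (m + 1) → ℝ}
    (hq : IsResetDist m q) (hq' : IsResetDist m q') {c : ℝ} (hc : c ∈ Set.Icc 0 1)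
    (h : tauHatC m CWmin q c < tauHatC m CWmin q' c) : alphaBar m q' c < alphaBar m q c :=
  (div_lt_div_iff_of_pos_left (kappa0_pos hCW) (by linarith [one_le_alphaBar hq hc])
    (by linarith [one_le_alphaBar hq' hc])).1 h

end ResetDist

namespace IsFixedPointQ

variable {m CWmin N : ℕ} {q : Fin (m + 1) → ℝ} {τ : ℝ}

lemma eq_kappa0_div_alphaBar (hτ : IsFixedPointQ m CWmin N q τ) :
    τ = kappa0 CWmin / alphaBar m q (collisionProb (N - 1) τ) :=
  hτ.2

lemma mul_alphaBar_eq (hτ : IsFixedPointQ m CWmin N q τ) (hq : IsResetDist m q) :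
    τ * alphaBar m q (collisionProb (N - 1) τ) = kappa0 CWmin :=
  (eq_div_iff (by linarith [one_le_alphaBar hq (collisionProb_mem_Icc (N - 1) hτ.1)])).1
    hτ.eq_kappa0_div_alphaBar

lemma pos (hτ : IsFixedPointQ m CWmin N q τ) (hq : IsResetDist m q) (hCW : 1 ≤ CWmin) : 0 < τ := by
  rw [hτ.eq_kappa0_div_alphaBar]
  exact div_pos (kappa0_pos hCW)
    (by linarith [one_le_alphaBar hq (collisionProb_mem_Icc (N - 1) hτ.1)])

lemma collisionProb_lt_one (hτ : IsFixedPointQ m CWmin N q τ) (hq : IsResetDist m q)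
    (hm : 1 ≤ m) (hCW : 2 ≤ CWmin) : collisionProb (N - 1) τ < 1 := by
  by_contra h
  have hc : collisionProb (N - 1) τ = 1 :=
    le_antisymm (collisionProb_mem_Icc _ hτ.1).2 (not_lt.1 h)
  have hτ_le : τ ≤ 1 / 2 := by
    rw [hτ.eq_kappa0_div_alphaBar, hc, alphaBar_one hq]
    exact div_le_div₀ zero_le_one (kappa0_le_one hCW) two_pos (le_self_pow₀ one_le_two (by omega))
  have := pow_pos (by linarith : 0 < 1 - τ) (N - 1)
  simp only [collisionProb] at hc
  linarith

end IsFixedPointQ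

theorem fixedPoint_lt_of_tauHatC_lt_general (m CWmin N : ℕ) (hm : 1 ≤ m) (hCW : 2 ≤ CWmin)
    (q q' : Fin (m + 1) → ℝ)
    (hq : IsResetDist m q) (hq' : IsResetDist m q')
    (hlt : ∀ c ∈ Set.Ico (0 : ℝ) 1, tauHatC m CWmin q c < tauHatC m CWmin q' c)
    (τ τ' : ℝ) (hτ : IsFixedPointQ m CWmin N q τ) (hτ' : IsFixedPointQ m CWmin N q' τ') :
    τ < τ' := by
  set c := collisionProb (N - 1) τ
  have hc : c ∈ Set.Ico 0 1 :=
    ⟨(collisionProb_mem_Icc _ hτ.1).1, hτ.collisionProb_lt_one hq hm hCW⟩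
  have hS : alphaBar m q' c < alphaBar m q c :=
    alphaBar_lt_of_tauHatC_lt (by omega) hq hq' (Set.Ico_subset_Icc_self hc) (hlt c hc)
  refine (monotoneOn_mul_alphaBar hq'.1 (N - 1)).reflect_lt hτ.1 hτ'.1 ?_
  calc τ * alphaBar m q' c < τ * alphaBar m q c := mul_lt_mul_of_pos_left hS (hτ.pos hq (by omega))
    _ = kappa0 CWmin := hτ.mul_alphaBar_eq hq
    _ = τ' * alphaBar m q' (collisionProb (N - 1) τ') := (hτ'.mul_alphaBar_eq hq').symm

/-- If `τ̂_c(q) < τ̂_c(q')` for every `c ∈ [0,1)`, then the fixed-point attempt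
probabilities satisfy `τ̂(q) < τ̂(q')`. -/
theorem fixedPoint_lt_of_tauHatC_lt (m CWmin N : ℕ) (hm : 1 ≤ m) (hCW : 2 ≤ CWmin)
    (hN : 2 ≤ N) (q q' : Fin (m + 1) → ℝ)
    (hq : IsResetDist m q) (hq' : IsResetDist m q')
    (hlt : ∀ c ∈ Set.Ico (0 : ℝ) 1, tauHatC m CWmin q c < tauHatC m CWmin q' c)
    (τ τ' : ℝ) (hτ : IsFixedPointQ m CWmin N q τ) (hτ' : IsFixedPointQ m CWmin N q' τ') :
    τ < τ' :=
  fixedPoint_lt_of_tauHatC_lt_general m CWmin N hm hCW q q' hq hq' hlt τ τ' hτ hτ'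
end

section
/- Suppose N ≥ 2. For every reset distribution q there exist j ∈ {0,…,m−1} and p_0 ∈ [0,1] such that the fixed-point attempt probabilities coincide: τ(j; p_0) = τ̂(q). That is, the family of RandomReset policies achieves every attempt probability achievable by an arbitrary reset distribution. -/
/-!
For fixed `c ∈ [0,1]` the backoff costs `α_j(c)` increase with `j`, so `∑_j q_j α_j(c)` lies
between `α_0(c)` and `α_m(c)`. The RandomReset(j; p₀) denominator interpolates, as `p₀` runs
over `[0,1]`, between `α_j(c)` and the mean of `α_{j+1}(c), …, α_m(c)`, which is at least
`α_{j+1}(c)`; choosing `j` as the first index with `α_{j+1}(c) ≥ ∑_j q_j α_j(c)` puts that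
value inside the interpolation range. With `c` the collision probability at `τ̂(q)`, the two
conditional attempt probabilities then coincide, so `τ̂(q)` is also a RandomReset fixed point.
-/

open Finset

lemma exists_mem_Icc_mix_eq {x y z : ℝ} (hz : z ∈ Set.Icc x y) :
    ∃ p ∈ Set.Icc (0 : ℝ) 1, p * x + (1 - p) * y = z := by
  rw [← segment_eq_Icc (hz.1.trans hz.2)] at hz
  obtain ⟨p, r, hp, hr, hpr, rfl⟩ := hz
  obtain rfl : r = 1 - p := by linarith
  exact ⟨p, ⟨hp, by linarith⟩, rfl⟩

lemma le_sum_Icc_div_of_monotoneOn {a : ℕ → ℝ} {j m : ℕ} (hjm : j < m)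
    (ha : MonotoneOn a (Set.Iic m)) :
    a (j + 1) ≤ (∑ i ∈ Icc (j + 1) m, a i) / ((m : ℝ) - j) := by
  have hcard : ((Icc (j + 1) m).card : ℝ) = (m : ℝ) - j := by
    rw [Nat.card_Icc, Nat.cast_sub (by omega)]
    push_cast
    ring
  have hmj : (0 : ℝ) < (m : ℝ) - j := by
    have : (j : ℝ) < m := by exact_mod_cast hjm
    linarith
  rw [le_div_iff₀ hmj, mul_comm, ← hcard, ← nsmul_eq_mul]
  refine card_nsmul_le_sum _ _ _ fun i hi => ?_
  obtain ⟨hji, him⟩ := mem_Icc.mp hi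
  exact ha (Set.mem_Iic.mpr (by omega)) (Set.mem_Iic.mpr him) hji

lemma exists_randomReset_mix_eq {a : ℕ → ℝ} {m : ℕ} (hm : 1 ≤ m)
    (ha : MonotoneOn a (Set.Iic m)) {D : ℝ} (hD : D ∈ Set.Icc (a 0) (a m)) :
    ∃ j < m, ∃ p ∈ Set.Icc (0 : ℝ) 1,
      p * a j + ((1 - p) / ((m : ℝ) - j)) * ∑ i ∈ Icc (j + 1) m, a i = D := by
  have hex : ∃ j, D ≤ a (j + 1) := ⟨m - 1, by rw [Nat.sub_add_cancel hm]; exact hD.2⟩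
  classical
  set j := Nat.find hex
  have hjm : j < m := by
    have := Nat.find_min' hex (show D ≤ a (m - 1 + 1) by rw [Nat.sub_add_cancel hm]; exact hD.2)
    omega
  have hjD : a j ≤ D := by
    rcases hj : j with _ | k
    · exact hD.1
    · exact (not_le.mp (Nat.find_min hex (show k < j by omega))).le
  have hDmean := (Nat.find_spec hex).trans (le_sum_Icc_div_of_monotoneOn hjm ha)
  obtain ⟨p, hp, hmix⟩ := exists_mem_Icc_mix_eq ⟨hjD, hDmean⟩
  exact ⟨j, hjm, p, hp, by rw [← hmix]; ring⟩

lemma alphaB_eq_of_lt {m j : ℕ} (c : ℝ) (hj : j < m) :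
    alphaB m j c = (1 - c) * 2 ^ j + c * alphaB m (j + 1) c := by
  unfold alphaB
  have hshift : ∀ i ∈ Icc (j + 1) m,
      (2 : ℝ) ^ i * c ^ (i - j) = c * (2 ^ i * c ^ (i - (j + 1))) := by
    intro i hi
    rw [show i - j = i - (j + 1) + 1 by have := (mem_Icc.mp hi).1; omega, pow_succ]
    ring
  rw [← insert_Icc_add_one_left_eq_Icc hj.le, sum_insert (by simp), sum_congr rfl hshift,
    ← mul_sum, Nat.sub_self, pow_zero, show m - j = m - (j + 1) + 1 by omega, pow_succ]
  ring

lemma pow_two_le_alphaB {m k : ℕ} {c : ℝ} (hc : c ∈ Set.Icc (0 : ℝ) 1) (hk : k ≤ m) :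
    (2 : ℝ) ^ k ≤ alphaB m k c := by
  induction hk using Nat.decreasingInduction with
  | self =>
    unfold alphaB
    rw [Icc_self, sum_singleton, Nat.sub_self, pow_zero]
    nlinarith [hc.2, pow_pos (two_pos (α := ℝ)) m]
  | of_succ k hk ih =>
    rw [alphaB_eq_of_lt c hk, pow_succ] at *
    nlinarith [hc.1, pow_pos (two_pos (α := ℝ)) k]

lemma monotoneOn_alphaB (m : ℕ) {c : ℝ} (hc : c ∈ Set.Icc (0 : ℝ) 1) :
    MonotoneOn (fun j => alphaB m j c) (Set.Iic m) := by
  refine monotoneOn_of_le_add_one Set.ordConnected_Iic fun j _ _ hj1 => ?_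
  have hj : j < m := Set.mem_Iic.mp hj1
  have h2 := pow_two_le_alphaB hc hj1
  rw [alphaB_eq_of_lt c hj, pow_succ] at *
  nlinarith [hc.2, pow_pos (two_pos (α := ℝ)) j]

lemma one_sub_one_sub_pow_mem_Icc {τ : ℝ} (hτ : τ ∈ Set.Icc (0 : ℝ) 1) (n : ℕ) :
    1 - (1 - τ) ^ n ∈ Set.Icc (0 : ℝ) 1 := by
  have h0 : 0 ≤ (1 - τ) ^ n := pow_nonneg (by linarith [hτ.2]) n
  have h1 : (1 - τ) ^ n ≤ 1 := pow_le_one₀ (by linarith [hτ.2]) (by linarith [hτ.1])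
  constructor <;> linarith

theorem RR_achieves_every_fixedPoint_general (m CWmin N : ℕ) (hm : 1 ≤ m)
    (q : Fin (m + 1) → ℝ) (hq : IsResetDist m q)
    (τq : ℝ) (hτq : IsFixedPointQ m CWmin N q τq) :
    ∃ j : ℕ, ∃ p0 : ℝ, j < m ∧ p0 ∈ Set.Icc (0 : ℝ) 1 ∧
      IsFixedPointRR m CWmin N j p0 τq := by
  obtain ⟨hτ, hτeq⟩ := hτq
  set c := 1 - (1 - τq) ^ (N - 1)
  have hc := one_sub_one_sub_pow_mem_Icc hτ (N - 1)
  have hmono := monotoneOn_alphaB m hc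
  have hD : ∑ j : Fin (m + 1), q j * alphaB m j c ∈ Set.Icc (alphaB m 0 c) (alphaB m m c) :=
    (convex_Icc _ _).sum_mem (fun j _ => hq.1 j) hq.2 fun j _ =>
      ⟨hmono (Set.mem_Iic.mpr (Nat.zero_le _)) (Set.mem_Iic.mpr j.is_le) (Nat.zero_le _),
        hmono (Set.mem_Iic.mpr j.is_le) (Set.mem_Iic.mpr le_rfl) j.is_le⟩
  obtain ⟨j, hjm, p0, hp0, hmix⟩ := exists_randomReset_mix_eq hm hmono hD
  refine ⟨j, p0, hjm, hp0, hτ, ?_⟩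
  rw [tauRRC, hmix]
  exact hτeq

/-- For `N ≥ 2` and every reset distribution `q`, there exist `j ∈ {0,…,m-1}` and
`p₀ ∈ [0,1]` such that the fixed-point attempt probabilities coincide: `τ(j;p₀) = τ̂(q)`.
The RandomReset family achieves every attempt probability achievable by an arbitrary
reset distribution. -/
theorem RR_achieves_every_fixedPoint (m CWmin N : ℕ) (hm : 1 ≤ m) (hCW : 2 ≤ CWmin)
    (hN : 2 ≤ N) (q : Fin (m + 1) → ℝ) (hq : IsResetDist m q)
    (τq : ℝ) (hτq : IsFixedPointQ m CWmin N q τq) :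
    ∃ j : ℕ, ∃ p0 : ℝ, j < m ∧ p0 ∈ Set.Icc (0 : ℝ) 1 ∧
      IsFixedPointRR m CWmin N j p0 τq :=
  RR_achieves_every_fixedPoint_general m CWmin N hm q hq τq hτq
end
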